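/- Let X be a complex Banach space, Δ : S(c₀(Γ)) → S(X) a surjective isometry, n₀ ∈ Γ, λ ∈ 𝕋, and φ a norm-one functional on X with φ⁻¹({1}) = Δ(A(n₀,λ)). Then |φ(Δ(x))| < 1 for every x ∈ S(c₀(Γ)) with |x(n₀)| < 1. -/
import Mathlib


open ZeroAtInfty Metric

/-- The canonical basis vector `e n` of `c₀(Γ)`. -/
noncomputable def stdBasis {Γ : Type*} [TopologicalSpace Γ] [DiscreteTopology Γ] [DecidableEq Γ]
    (n : Γ) : C₀(Γ, ℂ) where
  toFun := fun k => if k = n then 1 else 0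
  continuous_toFun := continuous_of_discreteTopology
  zero_at_infty' := by
    have h : (fun k => if k = n then (1 : ℂ) else 0) =ᶠ[Filter.cocompact Γ] 0 := by
      refine Filter.mem_cocompact.2 ⟨{n}, isCompact_singleton, ?_⟩
      intro k hk
      simp only [Set.mem_compl_iff, Set.mem_singleton_iff] at hk
      simp [hk]
    exact Filter.Tendsto.congr' h.symm tendsto_const_nhds

lemma stdBasis_apply {Γ : Type*} [TopologicalSpace Γ] [DiscreteTopology Γ] [DecidableEq Γ]
    (n k : Γ) : stdBasis n k = if k = n then 1 else 0 := rfl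

lemma c0_apply_le {Γ : Type*} [TopologicalSpace Γ] (f : C₀(Γ, ℂ)) (k : Γ) : ‖f k‖ ≤ ‖f‖ := by
  rw [← ZeroAtInftyContinuousMap.norm_toBCF_eq_norm]
  exact f.toBCF.norm_coe_le_norm k

lemma c0_norm_le {Γ : Type*} [TopologicalSpace Γ] (f : C₀(Γ, ℂ)) {M : ℝ} (hM : 0 ≤ M)
    (h : ∀ k, ‖f k‖ ≤ M) : ‖f‖ ≤ M := by
  rw [← ZeroAtInftyContinuousMap.norm_toBCF_eq_norm]
  exact (BoundedContinuousFunction.norm_le hM).2 (by simpa using h)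

/-- Build an element of `C₀(Γ, ℂ)` dominated pointwise by an existing one. -/
noncomputable def ofDominated {Γ : Type*} [TopologicalSpace Γ] [DiscreteTopology Γ]
    (x : C₀(Γ, ℂ)) (g : Γ → ℂ) (h : ∀ k, ‖g k‖ ≤ ‖x k‖) : C₀(Γ, ℂ) where
  toFun := g
  continuous_toFun := continuous_of_discreteTopology
  zero_at_infty' := by
    have hx : Filter.Tendsto (fun k => ‖x k‖) (Filter.cocompact Γ) (nhds 0) := by
      simpa using x.zero_at_infty'.norm
    exact squeeze_zero_norm h hx

lemma ofDominated_apply {Γ : Type*} [TopologicalSpace Γ] [DiscreteTopology Γ]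
    (x : C₀(Γ, ℂ)) (g : Γ → ℂ) (h : ∀ k, ‖g k‖ ≤ ‖x k‖) (k : Γ) :
    ofDominated x g h k = g k := rfl

lemma complex_eq_of_norm_add_eq_two {a b : ℂ} (ha : ‖a‖ ≤ 1) (hb : ‖b‖ = 1)
    (h : ‖a + b‖ = 2) : a = b := by
  have hp := parallelogram_law_with_norm ℂ a b
  have hd : ‖a - b‖ * ‖a - b‖ ≤ 0 := by nlinarith [norm_nonneg a, norm_nonneg (a - b)]
  have : ‖a - b‖ = 0 := le_antisymm (by nlinarith [norm_nonneg (a - b)]) (norm_nonneg _)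
  have := norm_eq_zero.mp this
  linear_combination this

lemma complex_zero_of_two_balls {γ : ℂ} (h1 : ‖γ - 1‖ ≤ 1) (h2 : ‖γ + 1‖ ≤ 1) : γ = 0 := by
  have hp := parallelogram_law_with_norm ℂ γ 1
  have h1' : ‖(1 : ℂ)‖ = 1 := by simp
  have : ‖γ‖ = 0 := by nlinarith [norm_nonneg γ, norm_nonneg (γ - 1), norm_nonneg (γ + 1)]
  exact norm_eq_zero.mp this

/-- A support functional for the face `A(n₀,λ)` satisfies `|φ(Δ x)| < 1` whenever
`|x(n₀)| < 1`. -/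
theorem supp_lt_one {Γ : Type*} [TopologicalSpace Γ] [DiscreteTopology Γ]
    [DecidableEq Γ] [Infinite Γ]
    {X : Type*} [NormedAddCommGroup X] [NormedSpace ℂ X] [CompleteSpace X]
    (Δ : sphere (0 : C₀(Γ, ℂ)) 1 → sphere (0 : X) 1)
    (hΔiso : Isometry Δ) (hΔsurj : Function.Surjective Δ)
    (n₀ : Γ) (lam : ℂ) (hlam : ‖lam‖ = 1)
    (φ : X →L[ℂ] ℂ) (hφ : ‖φ‖ = 1)
    (hface : {z : X | ‖z‖ = 1 ∧ φ z = 1} =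
      (fun w : sphere (0 : X) 1 => (w : X)) ''
        (Δ '' {x : sphere (0 : C₀(Γ, ℂ)) 1 | (x : C₀(Γ, ℂ)) n₀ = lam})) :
    ∀ x : sphere (0 : C₀(Γ, ℂ)) 1, ‖(x : C₀(Γ, ℂ)) n₀‖ < 1 → ‖φ (Δ x)‖ < 1 := by
  have normS : ∀ a : sphere (0 : C₀(Γ, ℂ)) 1, ‖(a : C₀(Γ, ℂ))‖ = 1 :=
    fun a => mem_sphere_zero_iff_norm.1 a.2
  have normSX : ∀ z : sphere (0 : X) 1, ‖(z : X)‖ = 1 :=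
    fun z => mem_sphere_zero_iff_norm.1 z.2
  have hdist : ∀ a b : sphere (0 : C₀(Γ, ℂ)) 1,
      ‖(Δ a : X) - (Δ b : X)‖ = ‖(a : C₀(Γ, ℂ)) - (b : C₀(Γ, ℂ))‖ := by
    intro a b
    calc ‖(Δ a : X) - (Δ b : X)‖ = dist (Δ a) (Δ b) := by
          rw [Subtype.dist_eq, dist_eq_norm]
      _ = dist a b := hΔiso.dist_eq a b
      _ = ‖(a : C₀(Γ, ℂ)) - (b : C₀(Γ, ℂ))‖ := by rw [Subtype.dist_eq, dist_eq_norm]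
  have hφb : ∀ z : X, ‖φ z‖ ≤ ‖z‖ := fun z => by
    have := φ.le_opNorm z; rwa [hφ, one_mul] at this
  -- points of the face evaluate to 1
  have faceval : ∀ a : sphere (0 : C₀(Γ, ℂ)) 1, (a : C₀(Γ, ℂ)) n₀ = lam → φ (Δ a) = 1 := by
    intro a ha
    have : ((Δ a : X)) ∈ {z : X | ‖z‖ = 1 ∧ φ z = 1} := by
      rw [hface]; exact ⟨Δ a, ⟨a, ha, rfl⟩, rfl⟩
    exact this.2
  -- uniform version of the negative face lemma
  have negface_unif : ∀ t : ℝ, 0 < t → t ≤ 1 → ∀ c : sphere (0 : C₀(Γ, ℂ)) 1,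
      (c : C₀(Γ, ℂ)) n₀ = -lam → (∀ k, k ≠ n₀ → ‖(c : C₀(Γ, ℂ)) k‖ ≤ 1 - t) →
      φ (Δ c) = -1 := by
    intro t ht ht1 c hc hck
    have hz : (-(Δ c : X)) ∈ sphere (0 : X) 1 := by
      rw [mem_sphere_zero_iff_norm, norm_neg]; exact normSX _
    obtain ⟨b', hb'⟩ := hΔsurj ⟨-(Δ c : X), hz⟩
    have hdist2 : ‖(b' : C₀(Γ, ℂ)) - (c : C₀(Γ, ℂ))‖ = 2 := by
      rw [← hdist b' c, hb']
      show ‖-(Δ c : X) - (Δ c : X)‖ = 2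
      have : -(Δ c : X) - (Δ c : X) = -((Δ c : X) + (Δ c : X)) := by abel
      rw [this, norm_neg, ← two_smul ℝ ((Δ c : X)), norm_smul]
      simp [normSX]
    have key : ∀ δ : ℝ, 0 < δ → δ < t → 2 - δ < ‖(b' : C₀(Γ, ℂ)) n₀ + lam‖ := by
      intro δ hδ hδt
      have hex : ∃ k, 2 - δ < ‖((b' : C₀(Γ, ℂ)) - (c : C₀(Γ, ℂ))) k‖ := by
        by_contra hcon
        push_neg at hcon
        have := c0_norm_le _ (by linarith : (0:ℝ) ≤ 2 - δ) hcon
        rw [hdist2] at this; linarith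
      obtain ⟨k, hk⟩ := hex
      have hsub : ((b' : C₀(Γ, ℂ)) - (c : C₀(Γ, ℂ))) k
          = (b' : C₀(Γ, ℂ)) k - (c : C₀(Γ, ℂ)) k := by simp
      have hbk : ‖(b' : C₀(Γ, ℂ)) k‖ ≤ 1 := by
        have := c0_apply_le (b' : C₀(Γ, ℂ)) k; rwa [normS b'] at this
      have hckn : 1 - δ < ‖(c : C₀(Γ, ℂ)) k‖ := by
        have h3 : ‖(b' : C₀(Γ, ℂ)) k - (c : C₀(Γ, ℂ)) k‖
            ≤ ‖(b' : C₀(Γ, ℂ)) k‖ + ‖(c : C₀(Γ, ℂ)) k‖ := norm_sub_le _ _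
        rw [hsub] at hk; linarith
      have hkn : k = n₀ := by
        by_contra hne
        have := hck k hne; linarith
      subst hkn
      rw [hsub, hc, sub_neg_eq_add] at hk
      exact hk
    have heq2 : ‖(b' : C₀(Γ, ℂ)) n₀ + lam‖ = 2 := by
      have hub : ‖(b' : C₀(Γ, ℂ)) n₀ + lam‖ ≤ 2 := by
        have h1 := norm_add_le ((b' : C₀(Γ, ℂ)) n₀) lam
        have h2 := c0_apply_le (b' : C₀(Γ, ℂ)) n₀
        rw [normS b'] at h2; rw [hlam] at h1; linarith
      refine le_antisymm hub ?_
      by_contra hcon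
      push_neg at hcon
      set v := ‖(b' : C₀(Γ, ℂ)) n₀ + lam‖ with hv
      have hδ1 : 0 < min (t / 2) ((2 - v) / 2) := by
        apply lt_min (by linarith) (by linarith)
      have hδ2 : min (t / 2) ((2 - v) / 2) < t := lt_of_le_of_lt (min_le_left _ _) (by linarith)
      have := key _ hδ1 hδ2
      have := min_le_right (t / 2) ((2 - v) / 2)
      linarith
    have hbn : (b' : C₀(Γ, ℂ)) n₀ = lam := by
      have hb1 : ‖(b' : C₀(Γ, ℂ)) n₀‖ ≤ 1 := by
        have := c0_apply_le (b' : C₀(Γ, ℂ)) n₀; rwa [normS b'] at this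
      exact complex_eq_of_norm_add_eq_two hb1 hlam heq2
    have h1 : φ (Δ b') = 1 := faceval b' hbn
    rw [hb'] at h1
    have h2 : φ (-(Δ c : X)) = 1 := h1
    rw [map_neg] at h2
    have := congrArg Neg.neg h2
    simpa using this
  -- the negative face lemma in general
  have negface : ∀ b : sphere (0 : C₀(Γ, ℂ)) 1, (b : C₀(Γ, ℂ)) n₀ = -lam →
      φ (Δ b) = -1 := by
    intro b hb
    have key : ∀ t : ℝ, 0 < t → t < 1 → ‖φ (Δ b) + 1‖ ≤ t := by
      intro t ht ht1
      set cc : C₀(Γ, ℂ) := ((1 - t : ℝ) : ℂ) • (b : C₀(Γ, ℂ)) + (-(t : ℂ) * lam) • stdBasis n₀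
        with hcc
      have ccap : ∀ k, cc k = ((1 - t : ℝ) : ℂ) * (b : C₀(Γ, ℂ)) k
          + (if k = n₀ then -(t : ℂ) * lam else 0) := by
        intro k
        by_cases hk : k = n₀ <;> simp [hcc, stdBasis_apply, hk]
      have ccn₀ : cc n₀ = -lam := by
        rw [ccap, hb]; simp; ring
      have ccoff : ∀ k, k ≠ n₀ → ‖cc k‖ ≤ 1 - t := by
        intro k hk
        rw [ccap, if_neg hk, add_zero, norm_mul]
        have h1 : ‖((1 - t : ℝ) : ℂ)‖ = 1 - t := by
          rw [Complex.norm_real]; exact abs_of_nonneg (by linarith)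
        have h2 : ‖(b : C₀(Γ, ℂ)) k‖ ≤ 1 := by
          have := c0_apply_le (b : C₀(Γ, ℂ)) k; rwa [normS b] at this
        rw [h1]
        nlinarith
      have ccnorm : ‖cc‖ = 1 := by
        refine le_antisymm (c0_norm_le _ zero_le_one ?_) ?_
        · intro k
          by_cases hk : k = n₀
          · subst hk; rw [ccn₀, norm_neg, hlam]
          · linarith [ccoff k hk]
        · have := c0_apply_le cc n₀
          rw [ccn₀, norm_neg, hlam] at this; exact this
      set cS : sphere (0 : C₀(Γ, ℂ)) 1 := ⟨cc, mem_sphere_zero_iff_norm.2 ccnorm⟩ with hcS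
      have hneg : φ (Δ cS) = -1 := negface_unif t ht ht1.le cS ccn₀ (fun k hk => ccoff k hk)
      have hd : ‖(b : C₀(Γ, ℂ)) - cc‖ ≤ t := by
        refine c0_norm_le _ ht.le ?_
        intro k
        have hsub : ((b : C₀(Γ, ℂ)) - cc) k = (b : C₀(Γ, ℂ)) k - cc k := by simp
        by_cases hk : k = n₀
        · subst hk
          rw [hsub, ccn₀, hb, sub_self, norm_zero]; exact ht.le
        · rw [hsub, ccap, if_neg hk, add_zero]
          have : (b : C₀(Γ, ℂ)) k - ((1 - t : ℝ) : ℂ) * (b : C₀(Γ, ℂ)) k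
              = (t : ℂ) * (b : C₀(Γ, ℂ)) k := by push_cast; ring
          rw [this, norm_mul]
          have h2 : ‖(b : C₀(Γ, ℂ)) k‖ ≤ 1 := by
            have := c0_apply_le (b : C₀(Γ, ℂ)) k; rwa [normS b] at this
          have h3 : ‖(t : ℂ)‖ = t := by
            rw [Complex.norm_real]; exact abs_of_nonneg ht.le
          rw [h3]; nlinarith
      calc ‖φ (Δ b) + 1‖ = ‖φ (Δ b) - φ (Δ cS)‖ := by rw [hneg, sub_neg_eq_add]
        _ = ‖φ ((Δ b : X) - (Δ cS : X))‖ := by rw [map_sub]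
        _ ≤ ‖(Δ b : X) - (Δ cS : X)‖ := hφb _
        _ = ‖(b : C₀(Γ, ℂ)) - cc‖ := hdist b cS
        _ ≤ t := hd
    have h0 : ‖φ (Δ b) + 1‖ ≤ 0 := by
      by_contra hcon
      push_neg at hcon
      set r := ‖φ (Δ b) + 1‖ with hr
      have hmin : 0 < min (r / 2) (1 / 2) := lt_min (by linarith) (by norm_num)
      have hmin2 : min (r / 2) (1 / 2) < 1 := lt_of_le_of_lt (min_le_right _ _) (by norm_num)
      have := key _ hmin hmin2
      have := min_le_left (r / 2) (1 / 2)
      linarith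
    have : φ (Δ b) + 1 = 0 := norm_le_zero_iff.mp h0
    linear_combination this
  -- vanishing on points with zero n₀ coordinate
  have zeroval : ∀ u : sphere (0 : C₀(Γ, ℂ)) 1, (u : C₀(Γ, ℂ)) n₀ = 0 →
      φ (Δ u) = 0 := by
    intro u hu
    have husp : ∀ k, ‖(u : C₀(Γ, ℂ)) k‖ ≤ 1 := fun k => by
      have := c0_apply_le (u : C₀(Γ, ℂ)) k; rwa [normS u] at this
    set vp : C₀(Γ, ℂ) := (u : C₀(Γ, ℂ)) + lam • stdBasis n₀ with hvp
    set vm : C₀(Γ, ℂ) := (u : C₀(Γ, ℂ)) - lam • stdBasis n₀ with hvm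
    have vpap : ∀ k, vp k = (u : C₀(Γ, ℂ)) k + (if k = n₀ then lam else 0) := by
      intro k; simp [hvp, stdBasis_apply, mul_ite]
    have vmap : ∀ k, vm k = (u : C₀(Γ, ℂ)) k - (if k = n₀ then lam else 0) := by
      intro k; simp [hvm, stdBasis_apply, mul_ite]
    have vpn : vp n₀ = lam := by rw [vpap, hu, if_pos rfl, zero_add]
    have vmn : vm n₀ = -lam := by rw [vmap, hu, if_pos rfl, zero_sub]
    have vpnorm : ‖vp‖ = 1 := by
      refine le_antisymm (c0_norm_le _ zero_le_one ?_) ?_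
      · intro k
        by_cases hk : k = n₀
        · subst hk; rw [vpn, hlam]
        · rw [vpap, if_neg hk, add_zero]; exact husp k
      · have := c0_apply_le vp n₀; rwa [vpn, hlam] at this
    have vmnorm : ‖vm‖ = 1 := by
      refine le_antisymm (c0_norm_le _ zero_le_one ?_) ?_
      · intro k
        by_cases hk : k = n₀
        · subst hk; rw [vmn, norm_neg, hlam]
        · rw [vmap, if_neg hk, sub_zero]; exact husp k
      · have := c0_apply_le vm n₀; rwa [vmn, norm_neg, hlam] at this
    set vpS : sphere (0 : C₀(Γ, ℂ)) 1 := ⟨vp, mem_sphere_zero_iff_norm.2 vpnorm⟩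
    set vmS : sphere (0 : C₀(Γ, ℂ)) 1 := ⟨vm, mem_sphere_zero_iff_norm.2 vmnorm⟩
    have hp1 : φ (Δ vpS) = 1 := faceval vpS vpn
    have hm1 : φ (Δ vmS) = -1 := negface vmS vmn
    have hdp : ‖(u : C₀(Γ, ℂ)) - vp‖ ≤ 1 := by
      refine c0_norm_le _ zero_le_one ?_
      intro k
      have hsub : ((u : C₀(Γ, ℂ)) - vp) k = (u : C₀(Γ, ℂ)) k - vp k := by simp
      rw [hsub, vpap]
      by_cases hk : k = n₀
      · subst hk; rw [if_pos rfl]; simp [hlam]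
      · rw [if_neg hk, add_zero, sub_self, norm_zero]; exact zero_le_one
    have hdm : ‖(u : C₀(Γ, ℂ)) - vm‖ ≤ 1 := by
      refine c0_norm_le _ zero_le_one ?_
      intro k
      have hsub : ((u : C₀(Γ, ℂ)) - vm) k = (u : C₀(Γ, ℂ)) k - vm k := by simp
      rw [hsub, vmap]
      by_cases hk : k = n₀
      · subst hk; rw [if_pos rfl]; simp [hlam]
      · rw [if_neg hk, sub_zero, sub_self, norm_zero]; exact zero_le_one
    have h1 : ‖φ (Δ u) - 1‖ ≤ 1 := by
      calc ‖φ (Δ u) - 1‖ = ‖φ ((Δ u : X) - (Δ vpS : X))‖ := by rw [map_sub, hp1]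
        _ ≤ ‖(Δ u : X) - (Δ vpS : X)‖ := hφb _
        _ = ‖(u : C₀(Γ, ℂ)) - vp‖ := hdist u vpS
        _ ≤ 1 := hdp
    have h2 : ‖φ (Δ u) + 1‖ ≤ 1 := by
      calc ‖φ (Δ u) + 1‖ = ‖φ ((Δ u : X) - (Δ vmS : X))‖ := by
            rw [map_sub, hm1, sub_neg_eq_add]
        _ ≤ ‖(Δ u : X) - (Δ vmS : X)‖ := hφb _
        _ = ‖(u : C₀(Γ, ℂ)) - vm‖ := hdist u vmS
        _ ≤ 1 := hdm
    exact complex_zero_of_two_balls h1 h2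
  -- main argument
  intro x hx
  set ε : ℝ := (1 - ‖(x : C₀(Γ, ℂ)) n₀‖) / 2 with hε
  have hε0 : 0 < ε := by
    have := norm_nonneg ((x : C₀(Γ, ℂ)) n₀); simp only [hε]; linarith
  have hε1 : ε ≤ 1 / 2 := by
    have := norm_nonneg ((x : C₀(Γ, ℂ)) n₀); simp only [hε]; linarith
  have hxsp : ∀ k, ‖(x : C₀(Γ, ℂ)) k‖ ≤ 1 := fun k => by
    have := c0_apply_le (x : C₀(Γ, ℂ)) k; rwa [normS x] at this
  set g : Γ → ℂ := fun j => if 1 - ε ≤ ‖(x : C₀(Γ, ℂ)) j‖ then (x : C₀(Γ, ℂ)) j else 0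
    with hg
  have hgdom : ∀ k, ‖g k‖ ≤ ‖(x : C₀(Γ, ℂ)) k‖ := by
    intro k
    simp only [hg]
    split
    · exact le_refl _
    · simp
  set u : C₀(Γ, ℂ) := ofDominated (x : C₀(Γ, ℂ)) g hgdom with hu
  have huap : ∀ k, u k = g k := fun k => rfl
  have hun₀ : u n₀ = 0 := by
    simp only [huap, hg]
    refine if_neg (not_le.2 ?_)
    simp only [hε]; linarith
  have hule : ∀ k, ‖u k‖ ≤ 1 := fun k => (hgdom k).trans (hxsp k)
  have hunorm : ‖u‖ = 1 := by
    refine le_antisymm (c0_norm_le _ zero_le_one hule) ?_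
    by_contra hcon
    push_neg at hcon
    set m : ℝ := max ‖u‖ (1 - ε) with hm
    have hm1 : m < 1 := max_lt hcon (by linarith)
    have hxle : ‖(x : C₀(Γ, ℂ))‖ ≤ m := by
      refine c0_norm_le _ (le_trans (norm_nonneg u) (le_max_left _ _)) ?_
      intro j
      by_cases hj : 1 - ε ≤ ‖(x : C₀(Γ, ℂ)) j‖
      · have huj : u j = (x : C₀(Γ, ℂ)) j := by simp only [huap, hg]; exact if_pos hj
        calc ‖(x : C₀(Γ, ℂ)) j‖ = ‖u j‖ := by rw [huj]
          _ ≤ ‖u‖ := c0_apply_le u j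
          _ ≤ m := le_max_left _ _
      · push_neg at hj
        exact le_trans hj.le (le_max_right _ _)
    rw [normS x] at hxle; linarith
  set uS : sphere (0 : C₀(Γ, ℂ)) 1 := ⟨u, mem_sphere_zero_iff_norm.2 hunorm⟩
  have hzero : φ (Δ uS) = 0 := zeroval uS hun₀
  have hxu : ‖(x : C₀(Γ, ℂ)) - u‖ ≤ 1 - ε := by
    refine c0_norm_le _ (by linarith) ?_
    intro j
    have hsub : ((x : C₀(Γ, ℂ)) - u) j = (x : C₀(Γ, ℂ)) j - u j := by simp
    rw [hsub]
    simp only [huap, hg]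
    by_cases hj : 1 - ε ≤ ‖(x : C₀(Γ, ℂ)) j‖
    · rw [if_pos hj, sub_self, norm_zero]; linarith
    · push_neg at hj
      rw [if_neg (not_le.2 hj), sub_zero]
      exact hj.le
  calc ‖φ (Δ x)‖ = ‖φ ((Δ x : X) - (Δ uS : X))‖ := by rw [map_sub, hzero, sub_zero]
    _ ≤ ‖(Δ x : X) - (Δ uS : X)‖ := hφb _
    _ = ‖(x : C₀(Γ, ℂ)) - u‖ := hdist x uS
    _ ≤ 1 - ε := hxu
    _ < 1 := by linarith
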